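/- arXiv:1011.3198 — 2 statements merged into one kernel-verified Lean document; each statement's English description precedes it below -/
import Mathlib

section
/- Let N ≥ 2 be an integer and let z = 1/N − 2πiα for α ∈ [−1/2, 1/2]. Then uniformly for every integer n with 1 ≤ n ≤ N, ∫_{−1/2}^{1/2} e(−nα)/z² dα = n e^{−n/N} + O(1), with an absolute implied constant. -/
/-!
With `a = 1/N`, the function `t ↦ t e^{-at}` on `[0, ∞)` has inverse Fourier transform
`(a - 2πiξ)⁻² = z⁻²` (a Laplace transform, computed from an explicit primitive), so Fourier
inversion evaluates the integral over all of `ℝ` exactly as `n e^{-n/N}`. Since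
`|z| ≥ 2π|α|`, the part of that integral outside `[-1/2, 1/2]` is at most
`2 ∫_{1/2}^∞ (2πα)⁻² dα = 1/π²`.
-/

open MeasureTheory Real Complex Filter Set
open scoped FourierTransform Topology

/-- `z = 1/N - 2πiα`. -/
noncomputable def zOf (N : ℕ) (α : ℝ) : ℂ :=
  1 / (N : ℂ) - 2 * (Real.pi : ℂ) * Complex.I * (α : ℂ)

lemma norm_cexp_neg_mul_ofReal (w : ℂ) (t : ℝ) :
    ‖cexp (-(w * t))‖ = rexp (-(w.re * t)) := by
  simp [Complex.norm_exp]

section Laplace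

variable {w : ℂ}

lemma tendsto_cexp_neg_mul_atTop (hw : 0 < w.re) :
    Tendsto (fun t : ℝ => cexp (-(w * t))) atTop (𝓝 0) := by
  rw [tendsto_zero_iff_norm_tendsto_zero]
  simp_rw [norm_cexp_neg_mul_ofReal]
  exact tendsto_exp_atBot.comp (tendsto_neg_atTop_atBot.comp (tendsto_id.const_mul_atTop hw))

lemma tendsto_ofReal_mul_cexp_neg_mul_atTop (hw : 0 < w.re) :
    Tendsto (fun t : ℝ => (t : ℂ) * cexp (-(w * t))) atTop (𝓝 0) := by
  rw [tendsto_zero_iff_norm_tendsto_zero]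
  refine (tendsto_rpow_mul_exp_neg_mul_atTop_nhds_zero 1 w.re hw).congr' ?_
  filter_upwards [eventually_ge_atTop 0] with t ht
  rw [norm_mul, norm_cexp_neg_mul_ofReal, Complex.norm_real, norm_of_nonneg ht, rpow_one, neg_mul]

lemma integrableOn_Ioi_ofReal_mul_cexp_neg_mul (hw : 0 < w.re) :
    IntegrableOn (fun t : ℝ => (t : ℂ) * cexp (-(w * t))) (Ioi 0) := by
  refine (integrableOn_rpow_mul_exp_neg_mul_rpow (s := 1) (p := 1) (by norm_num) one_pos hw).mono'
    (by fun_prop : Continuous fun t : ℝ => (t : ℂ) * cexp (-(w * t))).aestronglyMeasurable ?_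
  filter_upwards [ae_restrict_mem measurableSet_Ioi] with t (ht : 0 < t)
  rw [norm_mul, norm_cexp_neg_mul_ofReal, Complex.norm_real, norm_of_nonneg ht.le, rpow_one,
    neg_mul]

lemma integral_Ioi_ofReal_mul_cexp_neg_mul (hw : 0 < w.re) :
    ∫ t : ℝ in Ioi 0, (t : ℂ) * cexp (-(w * t)) = (w ^ 2)⁻¹ := by
  have hw0 : w ≠ 0 := fun h => by simp [h] at hw
  have hderiv : ∀ t ∈ Ici (0 : ℝ), HasDerivAt
      (fun t : ℝ => -(w⁻¹ * ((t : ℂ) * cexp (-(w * t))) + (w ^ 2)⁻¹ * cexp (-(w * t))))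
      ((t : ℂ) * cexp (-(w * t))) t := by
    intro t _
    have hid : HasDerivAt (fun t : ℝ => (t : ℂ)) 1 t := (hasDerivAt_id t).ofReal_comp
    have hexp : HasDerivAt (fun t : ℝ => cexp (-(w * t))) (cexp (-(w * t)) * -(w * 1)) t :=
      (hid.const_mul w).neg.cexp
    refine ((hid.fun_mul hexp).const_mul w⁻¹ |>.fun_add (hexp.const_mul (w ^ 2)⁻¹)).fun_neg
      |>.congr_deriv ?_
    field_simp
    ring
  have hlim := ((tendsto_ofReal_mul_cexp_neg_mul_atTop hw).const_mul w⁻¹ |>.add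
    ((tendsto_cexp_neg_mul_atTop hw).const_mul (w ^ 2)⁻¹)).neg
  rw [integral_Ioi_of_hasDerivAt_of_tendsto' hderiv (integrableOn_Ioi_ofReal_mul_cexp_neg_mul hw)
    (by simpa using hlim)]
  simp

end Laplace

lemma integrable_inv_sq_add_mul_sq {a : ℝ} (ha : a ≠ 0) {b : ℝ} (hb : b ≠ 0) :
    Integrable fun x : ℝ => (a ^ 2 + (b * x) ^ 2)⁻¹ := by
  refine ((integrable_inv_one_add_sq.comp_mul_left' (div_ne_zero hb ha)).const_mul
    (a ^ 2)⁻¹).congr (.of_forall fun x => ?_)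
  field_simp

lemma norm_inv_sq_eq (z : ℂ) : ‖(z ^ 2)⁻¹‖ = (z.re ^ 2 + z.im ^ 2)⁻¹ := by
  rw [norm_inv, norm_pow, Complex.sq_norm, normSq_apply, ← sq, ← sq]

noncomputable def oneSidedMulExp (a : ℝ) : ℝ → ℂ :=
  (Ici 0).indicator fun t => (t : ℂ) * cexp (-(a * t))

section OneSidedMulExp

variable {a : ℝ}

lemma integrable_oneSidedMulExp (ha : 0 < a) : Integrable (oneSidedMulExp a) := by
  rw [oneSidedMulExp, integrable_indicator_iff measurableSet_Ici,
    integrableOn_Ici_iff_integrableOn_Ioi]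
  exact integrableOn_Ioi_ofReal_mul_cexp_neg_mul (by simpa using ha)

lemma continuousAt_oneSidedMulExp {x : ℝ} (hx : 0 < x) : ContinuousAt (oneSidedMulExp a) x :=
  (by fun_prop : Continuous fun t : ℝ => (t : ℂ) * cexp (-(a * t))).continuousAt.congr <|
    eventuallyEq_of_mem (Ici_mem_nhds hx) fun _ ht => by rw [oneSidedMulExp, indicator_of_mem ht]

lemma fourierInv_oneSidedMulExp (ha : 0 < a) (ξ : ℝ) :
    𝓕⁻ (oneSidedMulExp a) ξ = (((a : ℂ) - 2 * π * I * ξ) ^ 2)⁻¹ := by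
  have hintegrand : ∀ v : ℝ, cexp (↑(-2 * π * v * -ξ) * I) • oneSidedMulExp a v =
      (Ici 0).indicator (fun t : ℝ => (t : ℂ) * cexp (-((a - 2 * π * I * ξ) * t))) v := by
    intro v
    by_cases hv : v ∈ Ici 0
    · simp only [oneSidedMulExp, indicator_of_mem hv, smul_eq_mul]
      rw [mul_left_comm, ← Complex.exp_add]
      push_cast
      ring_nf
    · simp [oneSidedMulExp, indicator_of_notMem hv]
  rw [fourierInv_eq_fourier_neg, Real.fourier_real_eq_integral_exp_smul,
    integral_congr_ae (.of_forall hintegrand), integral_indicator measurableSet_Ici,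
    integral_Ici_eq_integral_Ioi, integral_Ioi_ofReal_mul_cexp_neg_mul (by simpa using ha)]

lemma integrable_fourierInv_oneSidedMulExp (ha : 0 < a) :
    Integrable (𝓕⁻ (oneSidedMulExp a)) := by
  rw [funext (fourierInv_oneSidedMulExp ha)]
  refine (integrable_inv_sq_add_mul_sq ha.ne' (b := -2 * π) (by positivity)).mono'
    (by fun_prop : Measurable _).aestronglyMeasurable (.of_forall fun ξ => ?_)
  rw [norm_inv_sq_eq]
  simp

lemma norm_fourierInv_oneSidedMulExp_le (ha : 0 < a) {ξ : ℝ} (hξ : ξ ≠ 0) :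
    ‖𝓕⁻ (oneSidedMulExp a) ξ‖ ≤ ((2 * π * ξ) ^ 2)⁻¹ := by
  rw [fourierInv_oneSidedMulExp ha, norm_inv_sq_eq]
  refine inv_anti₀ (by positivity) ?_
  simp only [sub_re, ofReal_re, mul_re, re_ofNat, im_ofNat, ofReal_im, I_re, I_im, sub_im, mul_im]
  nlinarith [sq_nonneg a]

lemma fourier_fourierInv_oneSidedMulExp (ha : 0 < a) {x : ℝ} (hx : 0 < x) :
    𝓕 (𝓕⁻ (oneSidedMulExp a)) x = x * rexp (-(a * x)) := by
  have hint : Integrable (𝓕 (oneSidedMulExp a)) := by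
    simpa [fourierInv_eq_fourier_neg] using (integrable_fourierInv_oneSidedMulExp ha).comp_neg
  rw [(integrable_oneSidedMulExp ha).fourier_fourierInv_eq hint (continuousAt_oneSidedMulExp hx),
    oneSidedMulExp, indicator_of_mem (mem_Ici.2 hx.le)]
  push_cast
  rfl

end OneSidedMulExp

lemma integral_sub_intervalIntegral_eq {E : Type*} [NormedAddCommGroup E] [NormedSpace ℝ E]
    {h : ℝ → E} (hh : Integrable h) (T : ℝ) :
    (∫ x, h x) - ∫ x in -T..T, h x = ∫ x in Ioi T, (h x + h (-x)) := by
  rw [integral_add hh.integrableOn hh.comp_neg.integrableOn, integral_comp_neg_Ioi,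
    ← intervalIntegral.integral_Iic_add_Ioi hh.integrableOn hh.integrableOn,
    ← intervalIntegral.integral_Iic_sub_Iic hh.integrableOn hh.integrableOn]
  abel

lemma norm_integral_Ioi_le_of_norm_le_div_sq {E : Type*} [NormedAddCommGroup E] [NormedSpace ℝ E]
    {h : ℝ → E} {c C : ℝ} (hc : 0 < c) (hbound : ∀ x, c < x → ‖h x‖ ≤ C / x ^ 2) :
    ‖∫ x in Ioi c, h x‖ ≤ C / c := by
  have hrpow : ∀ x : ℝ, 0 < x → C / x ^ 2 = C * x ^ (-2 : ℝ) := fun x hx => by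
    rw [rpow_neg hx.le, rpow_two, div_eq_mul_inv]
  calc ‖∫ x in Ioi c, h x‖ ≤ ∫ x in Ioi c, C * x ^ (-2 : ℝ) := by
        refine norm_integral_le_of_norm_le
          ((integrableOn_Ioi_rpow_of_lt (by norm_num) hc).const_mul C) ?_
        filter_upwards [ae_restrict_mem measurableSet_Ioi] with x (hx : c < x)
        rw [← hrpow x (hc.trans hx)]
        exact hbound x hx
    _ = C / c := by
        rw [integral_const_mul, integral_Ioi_rpow_of_lt (by norm_num) hc]
        norm_num [rpow_neg_one, div_eq_mul_inv]

theorem residue_integral :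
    ∃ C : ℝ, 0 < C ∧ ∀ N : ℕ, 2 ≤ N → ∀ n : ℕ, 1 ≤ n → n ≤ N →
      ‖(∫ α in (-(1/2 : ℝ))..(1/2 : ℝ),
          Complex.exp (-(2 * (Real.pi : ℂ) * Complex.I * (n : ℂ) * (α : ℂ))) / zOf N α ^ 2) -
        ((n : ℂ) * Real.exp (-(n : ℝ) / N))‖ ≤ C := by
  refine ⟨1, one_pos, fun N hN n hn _ => ?_⟩
  have ha : (0 : ℝ) < 1 / N := by
    have : (0 : ℝ) < N := by exact_mod_cast (by omega : 0 < N)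
    positivity
  set G := 𝓕⁻ (oneSidedMulExp (1 / N))
  set h : ℝ → ℂ := fun α => cexp (↑(-2 * π * α * n) * I) • G α
  have h_eq : ∀ α : ℝ, cexp (-(2 * π * I * n * α)) / zOf N α ^ 2 = h α := fun α => by
    simp only [h, G]
    rw [fourierInv_oneSidedMulExp ha, zOf, smul_eq_mul, div_eq_mul_inv]
    push_cast
    ring_nf
  have h_int : Integrable h := (integrable_fourierInv_oneSidedMulExp ha).bdd_smul 1
    (by fun_prop : Continuous _).aestronglyMeasurable
    (.of_forall fun _ => (norm_exp_ofReal_mul_I _).le)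
  have h_full : ∫ α, h α = n * rexp (-(n : ℝ) / N) := by
    rw [← Real.fourier_real_eq_integral_exp_smul,
      fourier_fourierInv_oneSidedMulExp ha (by exact_mod_cast hn)]
    push_cast
    ring_nf
  have h_tail : ∀ ξ : ℝ, 1 / 2 < ξ →
      ‖h ξ + h (-ξ)‖ ≤ (2 * π ^ 2)⁻¹ / ξ ^ 2 := by
    intro ξ hξ
    have hξ0 : ξ ≠ 0 := by linarith
    calc ‖h ξ + h (-ξ)‖ ≤ ‖G ξ‖ + ‖G (-ξ)‖ := by
          simpa only [h, norm_smul, norm_exp_ofReal_mul_I, one_mul] using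
            norm_add_le (h ξ) (h (-ξ))
      _ ≤ ((2 * π * ξ) ^ 2)⁻¹ + ((2 * π * -ξ) ^ 2)⁻¹ :=
          add_le_add (norm_fourierInv_oneSidedMulExp_le ha hξ0)
            (norm_fourierInv_oneSidedMulExp_le ha (neg_ne_zero.2 hξ0))
      _ = (2 * π ^ 2)⁻¹ / ξ ^ 2 := by field_simp; ring
  simp_rw [h_eq]
  rw [← h_full, norm_sub_rev, integral_sub_intervalIntegral_eq h_int]
  calc _ ≤ (2 * π ^ 2)⁻¹ / (1 / 2) :=
        norm_integral_Ioi_le_of_norm_le_div_sq (by norm_num) h_tail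
    _ ≤ 1 := by
      rw [div_le_one (by norm_num)]
      exact inv_le_of_inv_le₀ (by positivity) (by nlinarith [pi_gt_three])
end

section
/- Let N ≥ 2 be an integer and let y be an integer with 1 ≤ y ≤ N. Then ∫_{−1/2}^{1/2} T(y; −α)/z² dα = ∑_{n=1}^{y} n e^{−n/N} + O(y), where z = 1/N − 2πiα, with an absolute implied constant. -/
open Finset

/-- `T(y; α) = ∑_{n=1}^{y} e(nα)`. -/
noncomputable def T (y : ℕ) (α : ℝ) : ℂ :=
  ∑ n ∈ Finset.Icc 1 y, Complex.exp (2 * (Real.pi : ℂ) * Complex.I * (n : ℂ) * (α : ℂ))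

/-!
The function `g(x) = x e^{-x/N}` for `x > 0` (and `0` otherwise) is integrable, and its inverse
Fourier transform is `1 / z(ξ)²`, which is integrable too. Fourier inversion therefore gives the
exact identity `∫_ℝ e(-nα) / z(α)² dα = n e^{-n/N}` for every `n ≥ 1`. Truncating to
`[-1/2, 1/2]` changes the integral by at most `∫_{|α| > 1/2} |z(α)|⁻² dα`, which is at most `2π`
uniformly in `n` and `N` since `|z(α)| ≥ 2π|α|`; summing over `1 ≤ n ≤ y` gives the error `2π y`.
-/

open MeasureTheory Filter
open Complex (I)
open scoped Real FourierTransform Complex Topology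

section Laplace

variable {s : ℂ}

lemma integrableOn_Ioi_mul_cexp_neg_mul (hs : 0 < s.re) :
    IntegrableOn (fun x : ℝ => (x : ℂ) * cexp (-(s * x))) (Set.Ioi 0) := by
  refine (integrableOn_rpow_mul_exp_neg_mul_rpow (p := 1) (s := 1) (by norm_num) one_pos hs).mono'
    (by fun_prop) ?_
  filter_upwards [ae_restrict_mem measurableSet_Ioi] with x (hx : 0 < x)
  simp [Complex.norm_exp, Complex.mul_re, abs_of_pos hx]

lemma tendsto_mul_cexp_neg_mul_atTop (hs : 0 < s.re) (a b : ℂ) :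
    Tendsto (fun x : ℝ => (a * x + b) * cexp (-(s * x))) atTop (𝓝 0) := by
  have hlin := tendsto_rpow_mul_exp_neg_mul_atTop_nhds_zero 1 s.re hs
  have hconst := tendsto_rpow_mul_exp_neg_mul_atTop_nhds_zero 0 s.re hs
  refine squeeze_zero_norm' (a := fun x => ‖a‖ * (x ^ (1:ℝ) * Real.exp (-s.re * x))
    + ‖b‖ * (x ^ (0:ℝ) * Real.exp (-s.re * x))) ?_ ?_
  · filter_upwards [eventually_ge_atTop 0] with x hx
    rw [norm_mul, Complex.norm_exp, Real.rpow_one, Real.rpow_zero, one_mul]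
    have : (-(s * x)).re = -s.re * x := by simp [Complex.mul_re]
    rw [this]
    have := norm_add_le (a * x) b
    rw [norm_mul, Complex.norm_real, Real.norm_of_nonneg hx] at this
    nlinarith [Real.exp_pos (-s.re * x)]
  · simpa using (hlin.const_mul ‖a‖).add (hconst.const_mul ‖b‖)

lemma integral_Ioi_mul_cexp_neg_mul (hs : 0 < s.re) :
    ∫ x in Set.Ioi (0:ℝ), (x : ℂ) * cexp (-(s * x)) = 1 / s ^ 2 := by
  have hs0 : s ≠ 0 := fun h => by simp [h] at hs
  have hderiv : ∀ x ∈ Set.Ioi (0:ℝ),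
      HasDerivAt (fun x : ℝ => (-s⁻¹ * x + -s⁻¹ ^ 2) * cexp (-(s * x)))
      ((x : ℂ) * cexp (-(s * x))) x := by
    intro x _
    have h1 : HasDerivAt (fun x : ℝ => -s⁻¹ * x + -s⁻¹ ^ 2) (-s⁻¹) x := by
      simpa using ((hasDerivAt_id x).ofReal_comp.const_mul (-s⁻¹)).add_const (-s⁻¹ ^ 2)
    have h2 : HasDerivAt (fun x : ℝ => cexp (-(s * x))) (cexp (-(s * x)) * -s) x := by
      simpa using ((hasDerivAt_id x).ofReal_comp.const_mul s).neg.cexp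
    exact (h1.mul h2).congr_deriv (by field_simp; ring)
  rw [integral_Ioi_of_hasDerivAt_of_tendsto (by fun_prop) hderiv
    (integrableOn_Ioi_mul_cexp_neg_mul hs) (tendsto_mul_cexp_neg_mul_atTop hs _ _)]
  simp

end Laplace

section Ramp

noncomputable def rampExp (c : ℂ) : ℝ → ℂ :=
  (Set.Ioi 0).indicator fun x => x * cexp (-(c * x))

variable {c : ℂ}

lemma integrable_rampExp (hc : 0 < c.re) : Integrable (rampExp c) :=
  (integrable_indicator_iff measurableSet_Ioi).2 (integrableOn_Ioi_mul_cexp_neg_mul hc)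

lemma continuousAt_rampExp {x : ℝ} (hx : 0 < x) : ContinuousAt (rampExp c) x := by
  refine ContinuousAt.congr (f := fun x : ℝ => (x : ℂ) * cexp (-(c * x))) (by fun_prop) ?_
  filter_upwards [Ioi_mem_nhds hx] with y hy
  rw [rampExp, Set.indicator_of_mem hy]

lemma fourierInv_rampExp (hc : 0 < c.re) (ξ : ℝ) :
    𝓕⁻ (rampExp c) ξ = 1 / (c - 2 * π * I * ξ) ^ 2 := by
  have hre : 0 < (c - 2 * π * I * ξ).re := by simpa using hc
  rw [Real.fourierInv_eq', ← integral_Ioi_mul_cexp_neg_mul hre,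
    ← integral_indicator measurableSet_Ioi]
  congr 1 with x
  by_cases hx : x ∈ Set.Ioi 0
  · simp only [rampExp, Set.indicator_of_mem hx, smul_eq_mul, ← mul_assoc, mul_comm _ (x : ℂ)]
    rw [mul_assoc, ← Complex.exp_add]
    congr 2
    push_cast [RCLike.inner_apply, Real.ringHom_apply]
    ring
  · simp [rampExp, Set.indicator_of_notMem hx]

end Ramp

section Kernel

variable {c : ℝ}

lemma norm_inv_sub_sq (c ξ : ℝ) :
    ‖1 / ((c : ℂ) - 2 * π * I * ξ) ^ 2‖ = (c ^ 2 + (2 * π * ξ) ^ 2)⁻¹ := by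
  have : (c : ℂ) - 2 * π * I * ξ = c + ((-(2 * π * ξ) : ℝ) : ℂ) * I := by
    push_cast
    ring
  rw [this, norm_div, norm_one, norm_pow, Complex.sq_norm, Complex.normSq_add_mul_I, neg_sq,
    one_div]

lemma integrable_inv_sub_sq (hc : 0 < c) :
    Integrable fun ξ : ℝ => 1 / ((c : ℂ) - 2 * π * I * ξ) ^ 2 := by
  have hne : ∀ ξ : ℝ, (c : ℂ) - 2 * π * I * ξ ≠ 0 := fun ξ h => by
    simpa [hc.ne'] using congrArg Complex.re h
  refine ((integrable_inv_one_add_sq.comp_mul_left' (R := 2 * π / c) (by positivity)).const_mul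
    (c ^ 2)⁻¹).mono' (continuous_const.div (by fun_prop)
      fun ξ => pow_ne_zero _ (hne ξ)).aestronglyMeasurable (.of_forall fun ξ => ?_)
  rw [norm_inv_sub_sq]
  apply le_of_eq
  field_simp

lemma integral_cexp_div_sub_sq (hc : 0 < c) {x : ℝ} (hx : 0 < x) :
    ∫ α : ℝ, cexp (-(2 * π * I * x * α)) / ((c : ℂ) - 2 * π * I * α) ^ 2
      = x * cexp (-(c * x)) := by
  have hc' : 0 < (c : ℂ).re := by simpa using hc
  have hinv : 𝓕⁻ (rampExp c) = fun ξ : ℝ => 1 / ((c : ℂ) - 2 * π * I * ξ) ^ 2 :=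
    funext (fourierInv_rampExp hc')
  have hfourier : Integrable (𝓕 (rampExp c)) := by
    have : 𝓕 (rampExp c) = fun w => 𝓕⁻ (rampExp c) (-w) := by
      ext w
      rw [Real.fourierInv_eq_fourier_neg, neg_neg]
    rw [this, hinv]
    exact (integrable_inv_sub_sq hc).comp_neg
  have := (integrable_rampExp hc').fourier_fourierInv_eq hfourier (continuousAt_rampExp hx)
  rw [hinv, Real.fourier_real_eq_integral_exp_smul, rampExp,
    Set.indicator_of_mem (Set.mem_Ioi.2 hx)] at this
  rw [← this]
  congr 1 with α
  rw [smul_eq_mul, mul_one_div]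
  congr 2
  push_cast
  ring

lemma norm_cexp_neg_two_pi_I_mul (x α : ℝ) : ‖cexp (-(2 * π * I * x * α))‖ = 1 := by
  rw [Complex.norm_exp]
  simp

lemma integrable_cexp_div_sub_sq (hc : 0 < c) (x : ℝ) :
    Integrable fun α : ℝ => cexp (-(2 * π * I * x * α)) / ((c : ℂ) - 2 * π * I * α) ^ 2 := by
  simp_rw [div_eq_mul_one_div (cexp _)]
  exact (integrable_inv_sub_sq hc).bdd_mul (c := 1) (by fun_prop)
    (.of_forall fun α => (norm_cexp_neg_two_pi_I_mul x α).le)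

lemma norm_setIntegral_compl_Ioc_cexp_div_sub_sq_le (c x : ℝ) :
    ‖∫ α : ℝ in (Set.Ioc (-(1 / 2)) (1 / 2))ᶜ,
      cexp (-(2 * π * I * x * α)) / ((c : ℂ) - 2 * π * I * α) ^ 2‖ ≤ 2 * π := by
  have hmaj : Integrable fun α : ℝ => 2 * (1 + α ^ 2)⁻¹ := integrable_inv_one_add_sq.const_mul 2
  have hbound : ∀ α ∉ Set.Ioc (-(1 / 2) : ℝ) (1 / 2),
      ‖cexp (-(2 * π * I * x * α)) / ((c : ℂ) - 2 * π * I * α) ^ 2‖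
        ≤ 2 * (1 + α ^ 2)⁻¹ := by
    intro α hα
    have hα2 : 1 / 4 ≤ α ^ 2 := by
      simp only [Set.mem_Ioc, not_and_or, not_lt, not_le] at hα
      rcases hα with h | h <;> nlinarith
    have hπα : 4 * α ^ 2 ≤ (2 * π * α) ^ 2 := by
      nlinarith [mul_nonneg (sub_nonneg.2 (one_le_pow₀ (n := 2) (by linarith [Real.pi_gt_three] :
        1 ≤ π))) (sq_nonneg α)]
    rw [div_eq_mul_one_div, norm_mul, norm_cexp_neg_two_pi_I_mul, one_mul, norm_inv_sub_sq,
      ← div_eq_mul_inv, ← one_div, div_le_div_iff₀ (by nlinarith [sq_nonneg c]) (by positivity)]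
    nlinarith [sq_nonneg c]
  calc _ ≤ ∫ α in (Set.Ioc (-(1 / 2) : ℝ) (1 / 2))ᶜ, 2 * (1 + α ^ 2)⁻¹ :=
        norm_integral_le_of_norm_le hmaj.integrableOn
          ((ae_restrict_iff' measurableSet_Ioc.compl).2 (.of_forall hbound))
    _ ≤ ∫ α, 2 * (1 + α ^ 2)⁻¹ :=
        setIntegral_le_integral hmaj (.of_forall fun α => by positivity)
    _ = 2 * π := by rw [integral_const_mul, integral_univ_inv_one_add_sq]

end Kernel

lemma norm_setIntegral_Ioc_cexp_div_sub_sq_sub_le {c x : ℝ} (hc : 0 < c) (hx : 0 < x) :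
    ‖(∫ α : ℝ in Set.Ioc (-(1 / 2)) (1 / 2),
      cexp (-(2 * π * I * x * α)) / ((c : ℂ) - 2 * π * I * α) ^ 2)
        - x * cexp (-(c * x))‖ ≤ 2 * π := by
  rw [← integral_cexp_div_sub_sq hc hx,
    ← integral_add_compl measurableSet_Ioc (integrable_cexp_div_sub_sq hc x),
    sub_add_cancel_left, norm_neg]
  exact norm_setIntegral_compl_Ioc_cexp_div_sub_sq_le c x

lemma T_neg_div_zOf_sq (N y : ℕ) (α : ℝ) :
    T y (-α) / zOf N α ^ 2 = ∑ n ∈ Icc 1 y,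
      cexp (-(2 * π * I * (n : ℝ) * α)) / (((1 / N : ℝ) : ℂ) - 2 * π * I * α) ^ 2 := by
  rw [T, sum_div]
  refine sum_congr rfl fun n _ => ?_
  simp only [zOf]
  push_cast
  ring_nf

theorem I1_evaluation :
    ∃ C : ℝ, 0 < C ∧ ∀ N : ℕ, 2 ≤ N → ∀ y : ℕ, 1 ≤ y → y ≤ N →
      ‖(∫ α in (-(1/2 : ℝ))..(1/2 : ℝ), T y (-α) / zOf N α ^ 2) -
          ((∑ n ∈ Finset.Icc 1 y, (n : ℝ) * Real.exp (-(n : ℝ) / N) : ℝ) : ℂ)‖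
        ≤ C * y := by
  refine ⟨2 * π, by positivity, fun N hN y _ _ => ?_⟩
  have hc : 0 < (1 / N : ℝ) := by positivity
  simp_rw [intervalIntegral.integral_of_le (by norm_num : -(1 / 2 : ℝ) ≤ 1 / 2), T_neg_div_zOf_sq]
  rw [integral_finsetSum _ fun (n : ℕ) _ => (integrable_cexp_div_sub_sq hc (n : ℝ)).integrableOn,
    Complex.ofReal_sum, ← sum_sub_distrib]
  calc _ ≤ ∑ _n ∈ Icc 1 y, 2 * π := norm_sum_le_of_le _ fun n hn => by
        have hn : (0 : ℝ) < n := Nat.cast_pos.2 (mem_Icc.1 hn).1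
        have hval : (((n : ℝ) * Real.exp (-(n : ℝ) / N) : ℝ) : ℂ)
            = (n : ℝ) * cexp (-((1 / N : ℝ) * (n : ℝ))) := by
          push_cast
          ring_nf
        exact hval ▸ norm_setIntegral_Ioc_cexp_div_sub_sq_sub_le hc hn
    _ = 2 * π * y := by simp [mul_comm]
end
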